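/- Let Z be a discrete ordered abelian group with least positive element 1_Z and O = {k·1_Z : k ∈ ℤ}. Let A ⊆ O be such that the set {k ∈ ℤ : k·1_Z ∈ A} is an eventually periodic subset of ℤ. Then there is a subset B of Z, definable with parameters in the language of ordered abelian groups, such that A = B ∩ O. -/

import Mathlib

open FirstOrder

/-- Function symbols of the language of ordered abelian groups:
a constant `0`, a unary `-`, and a binary `+`. -/
inductive OagFunc : ℕ → Type
  | zero : OagFunc 0
  | neg : OagFunc 1
  | add : OagFunc 2

/-- Relation symbols of the language of ordered abelian groups: a binary `<`. -/
inductive OagRel : ℕ → Type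
  | lt : OagRel 2

/-- The language of ordered abelian groups. -/
def Log : FirstOrder.Language := ⟨OagFunc, OagRel⟩

/-- Every linearly ordered abelian group is an `Log`-structure in the natural way. -/
instance (G : Type*) [AddCommGroup G] [LinearOrder G] [IsOrderedAddMonoid G] : Log.Structure G where
  funMap {_} f x :=
    match f with
    | OagFunc.zero => 0
    | OagFunc.neg => -(x 0)
    | OagFunc.add => x 0 + x 1
  RelMap {_} r x :=
    match r with
    | OagRel.lt => x 0 < x 1

/-- `A ⊆ ℤ` is eventually periodic. -/
def EvPeriodic (A : Set ℤ) : Prop :=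
  ∃ n : ℤ, 0 < n ∧ ∃ m m' : ℤ,
    (∀ k : ℤ, m ≤ k → (k ∈ A ↔ k + n ∈ A)) ∧
    (∀ k : ℤ, k ≤ m' → (k ∈ A ↔ k - n ∈ A))

/-!
The map `k ↦ k • 1_Z` is an order embedding of `ℤ` onto `O`, and for `n > 0` it matches
congruence modulo `n` in `ℤ` with congruence modulo `n • Z` in `Z`: if `n • y = k • 1_Z` with
`k = n q + s` and `0 < s < n`, then `0 < n • (y - q • 1_Z) = s • 1_Z < n • 1_Z`, which puts
`y - q • 1_Z` strictly between `0` and `1_Z`. An eventually periodic set of integers is a finite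
union of singletons and of sets `{k ≥ m | k ≡ r [n]}` and `{k ≤ m' | k ≡ r [n]}`, and each of these
is the trace on `O` of its evident definable counterpart in `Z`, such as
`{x ≥ m • 1_Z | ∃ y, n • y + r • 1_Z = x}`.
-/

namespace Log

open Language

variable {G : Type*} [AddCommGroup G] [LinearOrder G] [IsOrderedAddMonoid G]

-- The bare constructors have types `OagFunc _`, `OagRel _`; these copies are typed as symbols of
-- `Log`, so that the generic `realize` simp lemmas apply to them.
def zero : Log.Constants := OagFunc.zero

def add : Log.Functions 2 := OagFunc.add

def lt : Log.Relations 2 := OagRel.lt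

@[simp] theorem coe_zero : ((zero : Log.Constants) : G) = 0 := rfl

@[simp] theorem funMap_add (x : Fin 2 → G) : Structure.funMap add x = x 0 + x 1 := rfl

@[simp] theorem relMap_lt (x : Fin 2 → G) : Structure.RelMap lt x ↔ x 0 < x 1 := Iff.rfl

def nsmulTerm {α : Type*} (t : Log.Term α) : ℕ → Log.Term α
  | 0 => zero.term
  | n + 1 => add.apply₂ (nsmulTerm t n) t

@[simp] theorem realize_nsmulTerm {α : Type*} (t : Log.Term α) (v : α → G) (n : ℕ) :
    (nsmulTerm t n).realize v = n • t.realize v := by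
  induction n with
  | zero => simp [nsmulTerm]
  | succ n ih => simp [nsmulTerm, ih, succ_nsmul]

theorem definable₁_Ici (c : G) : Set.Definable₁ Set.univ Log (Set.Ici c) := by
  rw [Set.Definable₁, Set.definable_iff_exists_formula_sum]
  refine ⟨(lt.formula₂ (Term.var (Sum.inr 0)) (Term.var (Sum.inl ⟨c, trivial⟩))).not, ?_⟩
  ext x
  simp

theorem definable₁_Iic (c : G) : Set.Definable₁ Set.univ Log (Set.Iic c) := by
  rw [Set.Definable₁, Set.definable_iff_exists_formula_sum]
  refine ⟨(lt.formula₂ (Term.var (Sum.inl ⟨c, trivial⟩)) (Term.var (Sum.inr 0))).not, ?_⟩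
  ext x
  simp

theorem definable₁_setOf_exists_nsmul_add_eq (n : ℕ) (c : G) :
    Set.Definable₁ Set.univ Log {x | ∃ y, n • y + c = x} := by
  rw [Set.Definable₁, Set.definable_iff_exists_formula_sum]
  refine ⟨BoundedFormula.ex (Term.bdEqual
    (add.apply₂ (nsmulTerm (Term.var (Sum.inr 0)) n) (Term.var (Sum.inl (Sum.inl ⟨c, trivial⟩))))
    (Term.var (Sum.inl (Sum.inr 0)))), ?_⟩
  ext x
  simp [Formula.Realize, Fin.snoc]

end Log

namespace Set

variable {L : FirstOrder.Language} {M : Type*} [L.Structure M] {A : Set M}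

theorem Definable₁.union {s t : Set M} (hs : A.Definable₁ L s) (ht : A.Definable₁ L t) :
    A.Definable₁ L (s ∪ t) :=
  Definable.union hs ht

theorem Definable₁.inter {s t : Set M} (hs : A.Definable₁ L s) (ht : A.Definable₁ L t) :
    A.Definable₁ L (s ∩ t) :=
  Definable.inter hs ht

theorem definable₁_biUnion_finset {ι : Type*} {s : ι → Set M} (hs : ∀ i, A.Definable₁ L (s i))
    (F : Finset ι) : A.Definable₁ L (⋃ i ∈ F, s i) := by
  rw [Definable₁]
  convert definable_biUnion_finset hs F
  ext
  simp

end Set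

section Discrete

variable {G : Type*} [AddCommGroup G] [LinearOrder G] [IsOrderedAddMonoid G] {one : G}

theorem exists_nsmul_eq_zsmul_iff_dvd (h1 : IsLeast {x : G | 0 < x} one) {n : ℕ} (hn : 0 < n)
    (k : ℤ) : (∃ y : G, n • y = k • one) ↔ (n : ℤ) ∣ k := by
  refine ⟨fun ⟨y, hy⟩ => ?_, fun ⟨q, hq⟩ => ⟨q • one, by rw [hq, mul_zsmul, natCast_zsmul]⟩⟩
  have hn' : (0 : ℤ) < n := by exact_mod_cast hn
  have hrem : n • (y - (k / n) • one) = (k % n) • one := by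
    rw [smul_sub, hy, ← natCast_zsmul, ← mul_zsmul, Int.emod_def, sub_smul]
  rcases le_or_gt (y - (k / n) • one) 0 with hle | hpos
  · have : (k % n) • one ≤ (0 : ℤ) • one := by
      rw [← hrem, zero_zsmul]; exact nsmul_nonpos hle n
    rw [zsmul_le_zsmul_iff_left h1.1] at this
    exact Int.dvd_of_emod_eq_zero (le_antisymm this (Int.emod_nonneg k hn'.ne'))
  · have : (n : ℤ) • one ≤ (k % n) • one := by
      rw [← hrem, natCast_zsmul]; exact nsmul_le_nsmul_right (h1.2 hpos) n
    rw [zsmul_le_zsmul_iff_left h1.1] at this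
    exact absurd (Int.emod_lt_of_pos k hn') this.not_gt

theorem exists_nsmul_add_zsmul_eq_zsmul_iff_dvd (h1 : IsLeast {x : G | 0 < x} one) {n : ℕ}
    (hn : 0 < n) (k r : ℤ) : (∃ y : G, n • y + r • one = k • one) ↔ (n : ℤ) ∣ k - r := by
  simp only [← eq_sub_iff_add_eq, ← exists_nsmul_eq_zsmul_iff_dvd h1 hn, sub_smul]

end Discrete

namespace Int

variable {S : Set ℤ} {n : ℕ} {m : ℤ}

theorem add_mul_mem_iff_of_periodic_ge (hS : ∀ k, m ≤ k → (k ∈ S ↔ k + n ∈ S)) (t : ℕ) {j : ℤ}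
    (hj : m ≤ j) : j + t * n ∈ S ↔ j ∈ S := by
  induction t generalizing j with
  | zero => simp
  | succ t ih =>
    rw [hS j hj, ← ih (j := j + n) (by omega),
      show j + ((t + 1 : ℕ) : ℤ) * n = j + n + t * n by push_cast; ring]

theorem mem_iff_of_dvd_sub_of_periodic_ge (hS : ∀ k, m ≤ k → (k ∈ S ↔ k + n ∈ S)) {j k : ℤ}
    (hj : m ≤ j) (hk : m ≤ k) (hjk : (n : ℤ) ∣ k - j) : k ∈ S ↔ j ∈ S := by
  obtain ⟨q, hq⟩ := hjk
  obtain ⟨t, rfl | rfl⟩ := Int.eq_nat_or_neg q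
  · rw [show k = j + t * n by linarith, add_mul_mem_iff_of_periodic_ge hS t hj]
  · rw [show j = k + t * n by linarith, add_mul_mem_iff_of_periodic_ge hS t hk]

theorem mem_iff_of_dvd_sub_of_periodic_le {m' : ℤ} (hS : ∀ k, k ≤ m' → (k ∈ S ↔ k - n ∈ S))
    {j k : ℤ} (hj : j ≤ m') (hk : k ≤ m') (hjk : (n : ℤ) ∣ k - j) : k ∈ S ↔ j ∈ S := by
  have hS' : ∀ k, -m' ≤ k → (-k ∈ S ↔ -(k + n) ∈ S) := fun k hk => by
    rw [neg_add', hS (-k) (by omega)]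
  simpa using mem_iff_of_dvd_sub_of_periodic_ge (S := -S) hS' (neg_le_neg hj) (neg_le_neg hk)
    (by rw [neg_sub_neg]; exact (dvd_sub_comm).1 hjk)

theorem exists_mem_Ico_dvd_sub (hn : 0 < n) (m k : ℤ) :
    ∃ r, m ≤ r ∧ r < m + n ∧ (n : ℤ) ∣ k - r := by
  have hn' : (0 : ℤ) < n := by exact_mod_cast hn
  refine ⟨m + (k - m) % n, by linarith [Int.emod_nonneg (k - m) hn'.ne'],
    by linarith [Int.emod_lt_of_pos (k - m) hn'], ⟨(k - m) / n, ?_⟩⟩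
  rw [Int.emod_def]; ring

end Int

theorem EvPeriodic.exists_finset_normal_form {S : Set ℤ} (h : EvPeriodic S) :
    ∃ n : ℕ, 0 < n ∧ ∃ (m m' : ℤ) (Fup Fdown Fmid : Finset ℤ), ∀ k, k ∈ S ↔
      (m ≤ k ∧ ∃ r ∈ Fup, (n : ℤ) ∣ k - r) ∨ (k ≤ m' ∧ ∃ r ∈ Fdown, (n : ℤ) ∣ k - r) ∨
        k ∈ Fmid := by
  classical
  obtain ⟨n, hn, m, m', hup, hdown⟩ := h
  lift n to ℕ using hn.le
  refine ⟨n, by exact_mod_cast hn, m, m', (Finset.Ico m (m + n)).filter (· ∈ S),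
    (Finset.Ioc (m' - n) m').filter (· ∈ S), (Finset.Ioo m' m).filter (· ∈ S), fun k => ?_⟩
  simp only [Finset.mem_filter, Finset.mem_Ico, Finset.mem_Ioc, Finset.mem_Ioo]
  constructor
  · intro hk
    rcases le_or_gt m k with hmk | hmk
    · obtain ⟨r, hmr, hrm, hd⟩ := Int.exists_mem_Ico_dvd_sub (by exact_mod_cast hn) m k
      have hr : r ∈ S := (Int.mem_iff_of_dvd_sub_of_periodic_ge hup hmr hmk hd).1 hk
      exact Or.inl ⟨hmk, r, ⟨⟨hmr, hrm⟩, hr⟩, hd⟩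
    rcases le_or_gt k m' with hkm' | hkm'
    · obtain ⟨r, hmr, hrm, hd⟩ :=
        Int.exists_mem_Ico_dvd_sub (by exact_mod_cast hn) (m' - n + 1) k
      have hr : r ∈ S := (Int.mem_iff_of_dvd_sub_of_periodic_le hdown (by omega) hkm' hd).1 hk
      exact Or.inr (Or.inl ⟨hkm', r, ⟨⟨by omega, by omega⟩, hr⟩, hd⟩)
    · exact Or.inr (Or.inr ⟨⟨hkm', hmk⟩, hk⟩)
  · rintro (⟨hmk, r, ⟨⟨hmr, -⟩, hr⟩, hd⟩ | ⟨hkm', r, ⟨⟨-, hrm'⟩, hr⟩, hd⟩ | ⟨-, hk⟩)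
    · exact (Int.mem_iff_of_dvd_sub_of_periodic_ge hup hmr hmk hd).2 hr
    · exact (Int.mem_iff_of_dvd_sub_of_periodic_le hdown hrm' hkm' hd).2 hr
    · exact hk

/-- If `A ⊆ O = {k • 1_Z : k ∈ ℤ}` corresponds to an eventually periodic subset of `ℤ`,
then `A = B ∩ O` for some definable `B ⊆ Z`. -/
theorem stmt_15 (Z : Type) [AddCommGroup Z] [LinearOrder Z] [IsOrderedAddMonoid Z] (one : Z)
    (h1 : IsLeast {x : Z | 0 < x} one) (A : Set Z)
    (hAO : A ⊆ Set.range (fun k : ℤ => k • one))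
    (hep : EvPeriodic {k : ℤ | k • one ∈ A}) :
    ∃ B : Set Z, Set.Definable₁ (Set.univ : Set Z) Log B ∧
      A = B ∩ Set.range (fun k : ℤ => k • one) := by
  obtain ⟨n, hn, m, m', Fup, Fdown, Fmid, hA⟩ := hep.exists_finset_normal_form
  let R : ℤ → Set Z := fun r => {x | ∃ y, n • y + r • one = x}
  let B : Set Z := (Set.Ici (m • one) ∩ ⋃ r ∈ Fup, R r) ∪
    (Set.Iic (m' • one) ∩ ⋃ r ∈ Fdown, R r) ∪ ⋃ r ∈ Fmid, {r • one}
  have hB : Set.Definable₁ Set.univ Log B :=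
    (((Log.definable₁_Ici _).inter (Set.definable₁_biUnion_finset
        (fun _ => Log.definable₁_setOf_exists_nsmul_add_eq n _) Fup)).union
      ((Log.definable₁_Iic _).inter (Set.definable₁_biUnion_finset
        (fun _ => Log.definable₁_setOf_exists_nsmul_add_eq n _) Fdown))).union
    (Set.definable₁_biUnion_finset
      (fun _ => Set.Definable.singleton_of_mem Log (Set.mem_univ _)) Fmid)
  have hBA : ∀ k : ℤ, k • one ∈ B ↔ k • one ∈ A := fun k => by
    simpa [B, R, or_assoc, exists_nsmul_add_zsmul_eq_zsmul_iff_dvd h1 hn,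
      zsmul_le_zsmul_iff_left h1.1, zsmul_left_inj h1.1] using (hA k).symm
  refine ⟨B, hB, Set.ext fun x => ⟨fun hx => ?_, ?_⟩⟩
  · obtain ⟨k, rfl⟩ := hAO hx
    exact ⟨(hBA k).2 hx, k, rfl⟩
  · rintro ⟨hx, k, rfl⟩
    exact (hBA k).1 hx
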